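/- Let (Ω,d,μ) be a metric probability space, 1 ≤ q < ∞, and let N ∈ 𝒩 be such that t ↦ N(t)^{1/q}/t is non-decreasing on (0,∞). The following are equivalent: (1) D₁·‖f − M_μ f‖_{N(μ)} ≤ ‖|∇f|‖_{L_q(μ)} for all f ∈ ℱ; (2) D₂·‖f − M_μ f‖_{N(μ),∞} ≤ ‖|∇f|‖_{L_q(μ)} for all f ∈ ℱ. The best constants satisfy D₁ ≤ D₂ ≤ 4 D₁. -/

import Mathlib

open MeasureTheory Filter Set Metric
open scoped ENNReal NNReal Topology

noncomputable section

/-- The class 𝒩 of continuous increasing functions mapping ℝ₊ onto ℝ₊. -/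
structure MemN (N : ℝ → ℝ) : Prop where
  contOn : ContinuousOn N (Ici 0)
  strictMonoOn : StrictMonoOn N (Ici 0)
  mapsTo : MapsTo N (Ici 0) (Ici 0)
  surjOn : SurjOn N (Ici 0) (Ici 0)

/-- A Young function: convex, increasing, vanishing at 0. -/
structure IsYoung (N : ℝ → ℝ) : Prop where
  convexOn : ConvexOn ℝ (Ici 0) N
  strictMonoOn : StrictMonoOn N (Ici 0)
  zero : N 0 = 0

/-- The (generalized) inverse `N⁻¹` of `N : ℝ₊ → ℝ₊`. -/
def ninv (N : ℝ → ℝ) (y : ℝ) : ℝ := sInf {t : ℝ | 0 ≤ t ∧ y ≤ N t}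

/-- The adjoint function `N^∧(t) = 1 / N⁻¹(1/t)`. -/
def nwedge (N : ℝ → ℝ) (t : ℝ) : ℝ := 1 / ninv N (1 / t)

variable {Ω : Type*}

/-- The class ℱ of functions which are Lipschitz on every ball. -/
def LipschitzOnBalls [PseudoMetricSpace Ω] (f : Ω → ℝ) : Prop :=
  ∀ (x : Ω) (r : ℝ), ∃ K : ℝ≥0, LipschitzOnWith K f (Metric.ball x r)

/-- The modulus of the gradient `|∇f|(x)` (equal to 0 at isolated points). -/
def gradNorm [PseudoMetricSpace Ω] (f : Ω → ℝ) (x : Ω) : ℝ :=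
  limsup (fun y => |f y - f x| / dist y x) (𝓝[≠] x)

/-- `‖ |∇f| ‖_{L_q(μ)}`. -/
def gradLqNorm [PseudoMetricSpace Ω] [MeasurableSpace Ω] (μ : Measure Ω) (q : ℝ≥0∞)
    (f : Ω → ℝ) : ℝ≥0∞ :=
  eLpNorm (gradNorm f) q μ

/-- The Orlicz (quasi-)norm `‖f‖_{N(μ)}`. -/
def orliczNorm [MeasurableSpace Ω] (μ : Measure Ω) (N : ℝ → ℝ) (f : Ω → ℝ) : ℝ :=
  sInf {v : ℝ | 0 < v ∧ ∫⁻ x, ENNReal.ofReal (N (|f x| / v)) ∂μ ≤ 1}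

/-- The dual norm `‖f‖_{N(μ)*}`. -/
def dualOrliczNorm [MeasurableSpace Ω] (μ : Measure Ω) (N : ℝ → ℝ) (f : Ω → ℝ) : ℝ :=
  sSup {r : ℝ | ∃ g : Ω → ℝ, orliczNorm μ N g ≤ 1 ∧ r = ∫ x, f x * g x ∂μ}

/-- The weak Orlicz quasi-norm `‖f‖_{N(μ),∞} = sup_{t>0} N^∧(μ{|f|≥t})·t`. -/
def weakOrliczNorm [MeasurableSpace Ω] (μ : Measure Ω) (N : ℝ → ℝ) (f : Ω → ℝ) : ℝ :=
  sSup {r : ℝ | ∃ t : ℝ, 0 < t ∧ r = nwedge N ((μ {x | t ≤ |f x|}).toReal) * t}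

/-- `m` is a median of `f` under `μ`. -/
def IsMedian [MeasurableSpace Ω] (μ : Measure Ω) (f : Ω → ℝ) (m : ℝ) : Prop :=
  (1 / 2 : ℝ≥0∞) ≤ μ {x | m ≤ f x} ∧ (1 / 2 : ℝ≥0∞) ≤ μ {x | f x ≤ m}

/-- Minkowski's exterior boundary measure `μ⁺(A)`. -/
def boundaryMeasure [PseudoMetricSpace Ω] [MeasurableSpace Ω] (μ : Measure Ω) (A : Set Ω) :
    ℝ≥0∞ :=
  liminf (fun ε : ℝ => (μ (Metric.thickening ε A) - μ A) / ENNReal.ofReal ε) (𝓝[>] (0 : ℝ))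

/-- The isoperimetric profile `I(t)`: the maximal function with `μ⁺(A) ≥ I(μ(A))`. -/
def isoProfile [PseudoMetricSpace Ω] [MeasurableSpace Ω] (μ : Measure Ω) (t : ℝ) : ℝ≥0∞ :=
  ⨅ (A : Set Ω) (_ : MeasurableSet A) (_ : μ A = ENNReal.ofReal t), boundaryMeasure μ A

/-- `Ĩ(t) = min(I(t), I(1-t))`. -/
def tildeIsoProfile [PseudoMetricSpace Ω] [MeasurableSpace Ω] (μ : Measure Ω) (t : ℝ) : ℝ≥0∞ :=
  min (isoProfile μ t) (isoProfile μ (1 - t))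

/-- The `q`-capacity `Cap_q(a,b)`. -/
def capacity [PseudoMetricSpace Ω] [MeasurableSpace Ω] (μ : Measure Ω) (q a b : ℝ) : ℝ≥0∞ :=
  ⨅ (Φ : Ω → ℝ) (_ : LipschitzOnBalls Φ) (_ : ∀ x, Φ x ∈ Icc (0 : ℝ) 1)
    (_ : ENNReal.ofReal a ≤ μ {x | Φ x = 1}) (_ : ENNReal.ofReal (1 - b) ≤ μ {x | Φ x = 0}),
    gradLqNorm μ (ENNReal.ofReal q) Φ

/-- A log-concave function (of the form exp(-ψ) with ψ convex, ℝ ∪ {+∞} valued). -/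
def IsLogConcaveFn {E : Type*} [AddCommGroup E] [Module ℝ E] (f : E → ℝ) : Prop :=
  (∀ x, 0 ≤ f x) ∧
    ∀ x y : E, ∀ a b : ℝ, 0 ≤ a → 0 ≤ b → a + b = 1 → f x ^ a * f y ^ b ≤ f (a • x + b • y)

/-- An absolutely continuous log-concave measure on Euclidean space. -/
def IsLogConcaveMeasure {n : ℕ} (μ : Measure (EuclideanSpace ℝ (Fin n))) : Prop :=
  ∃ f : EuclideanSpace ℝ (Fin n) → ℝ, IsLogConcaveFn f ∧
    μ = volume.withDensity fun x => ENNReal.ofReal (f x)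

/-!
(1) ⇒ (2): by Chebyshev's inequality every term `N^∧(μ{|f - m| ≥ t}) t` of the weak norm is at
most the Orlicz norm of `f - m`. Apply (1) to `f` truncated at `m ± t`: the truncation has the same
median, the same level set `{|f - m| ≥ t}` and a smaller gradient.

(2) ⇒ (1): put `u = f - m` and cut `{u > 0}` into the dyadic layers `{s 2ᵏ ≤ u < s 2ᵏ⁺¹}`.
Testing (2) on `u` truncated to `[t, 2t]` bounds `N^∧(μ{u ≥ 2t}) t` by the `L_q` norm of `|∇u|` on
`{t ≤ u ≤ 2t}`; since `N(t)^{1/q}/t` is non-decreasing, this bounds `∫_{2t ≤ u < 4t} N(u/v)` by the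
`q`-th power of that local gradient norm, divided by `(D v / 4)^q`. The factor `4` is the ratio
between the top `4t` of a layer and the truncation level `t`. Choosing `s` so that no level
`s 2ᵏ` carries mass, the local gradient norms add up to at most `‖|∇f|‖_q^q`; the same argument
applies to `-u`.
-/
namespace MemN

variable {N : ℝ → ℝ}

lemma nonneg (hN : MemN N) {t : ℝ} (ht : 0 ≤ t) : 0 ≤ N t := hN.mapsTo ht

lemma apply_le_apply (hN : MemN N) {a b : ℝ} (ha : 0 ≤ a) (hab : a ≤ b) : N a ≤ N b :=
  hN.strictMonoOn.monotoneOn ha (ha.trans hab) hab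

lemma map_zero (hN : MemN N) : N 0 = 0 := by
  obtain ⟨t, ht, hNt⟩ := hN.surjOn (mem_Ici.mpr (le_refl (0 : ℝ)))
  rcases (mem_Ici.mp ht).eq_or_lt with rfl | ht
  · exact hNt
  · have := hN.strictMonoOn (mem_Ici.mpr le_rfl) (mem_Ici.mpr ht.le) ht
    linarith [hN.nonneg (le_refl (0 : ℝ))]

lemma ninv_eq (hN : MemN N) {y t : ℝ} (ht : 0 ≤ t) (hNt : N t = y) : ninv N y = t := by
  refine le_antisymm (csInf_le ⟨0, fun a ha => ha.1⟩ ⟨ht, hNt.ge⟩) ?_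
  refine le_csInf ⟨t, ht, hNt.ge⟩ fun a ⟨ha, hya⟩ => ?_
  by_contra! hat
  exact (hNt ▸ hN.strictMonoOn ha ht hat).not_ge hya

lemma exists_ninv_eq (hN : MemN N) {y : ℝ} (hy : 0 ≤ y) :
    ∃ t, 0 ≤ t ∧ N t = y ∧ ninv N y = t := by
  obtain ⟨t, ht, hNt⟩ := hN.surjOn (mem_Ici.mpr hy)
  exact ⟨t, ht, hNt, hN.ninv_eq ht hNt⟩

lemma ninv_nonneg (hN : MemN N) {y : ℝ} (hy : 0 ≤ y) : 0 ≤ ninv N y := by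
  obtain ⟨t, ht, -, rfl⟩ := hN.exists_ninv_eq hy
  exact ht

lemma apply_ninv (hN : MemN N) {y : ℝ} (hy : 0 ≤ y) : N (ninv N y) = y := by
  obtain ⟨t, -, hNt, rfl⟩ := hN.exists_ninv_eq hy
  exact hNt

lemma ninv_pos (hN : MemN N) {y : ℝ} (hy : 0 < y) : 0 < ninv N y := by
  refine (hN.ninv_nonneg hy.le).lt_of_ne fun h => hy.ne ?_
  rw [← hN.apply_ninv hy.le, ← h, hN.map_zero]

lemma le_ninv (hN : MemN N) {t y : ℝ} (ht : 0 ≤ t) (hy : 0 ≤ y) (h : N t ≤ y) :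
    t ≤ ninv N y := by
  by_contra! hlt
  have := hN.strictMonoOn (hN.ninv_nonneg hy) ht hlt
  rw [hN.apply_ninv hy] at this
  exact this.not_ge h

lemma nwedge_zero (hN : MemN N) : nwedge N 0 = 0 := by
  simp [nwedge, hN.ninv_eq le_rfl hN.map_zero]

lemma nwedge_nonneg (hN : MemN N) {p : ℝ} (hp : 0 ≤ p) : 0 ≤ nwedge N p := by
  rcases hp.eq_or_lt with rfl | hp
  · rw [hN.nwedge_zero]
  · exact one_div_nonneg.mpr (hN.ninv_nonneg (by positivity))

lemma nwedge_le (hN : MemN N) {p : ℝ} (hp0 : 0 ≤ p) (hp1 : p ≤ 1) :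
    nwedge N p ≤ 1 / ninv N 1 := by
  rcases hp0.eq_or_lt with rfl | hp
  · rw [hN.nwedge_zero]
    exact one_div_nonneg.mpr (hN.ninv_nonneg zero_le_one)
  · refine one_div_le_one_div_of_le (hN.ninv_pos one_pos) (hN.le_ninv
      (hN.ninv_nonneg zero_le_one) (by positivity) ?_)
    rw [hN.apply_ninv zero_le_one]
    exact one_le_one_div hp hp1

end MemN

section Growth

variable {N : ℝ → ℝ} {q : ℝ}

lemma apply_le_div_rpow_mul_of_monotoneOn
    (hNq : MonotoneOn (fun t => N t ^ (1 / q) / t) (Ioi 0)) (hN : ∀ t, 0 ≤ t → 0 ≤ N t) (hq : 0 < q) {z β : ℝ} (hz : 0 < z) (hzβ : z ≤ β) :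
    N z ≤ (z / β) ^ q * N β := by
  have hβ : 0 < β := hz.trans_le hzβ
  have h : N z ^ (1 / q) ≤ z / β * N β ^ (1 / q) := by
    have := hNq hz hβ hzβ
    simp only at this
    rw [div_le_div_iff₀ hz hβ] at this
    rw [div_mul_eq_mul_div, le_div_iff₀ hβ]
    linarith
  calc N z = (N z ^ (1 / q)) ^ q := by
        rw [← Real.rpow_mul (hN z hz.le), one_div_mul_cancel hq.ne', Real.rpow_one]
    _ ≤ (z / β * N β ^ (1 / q)) ^ q := by
        gcongr
        exact Real.rpow_nonneg (hN z hz.le) _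
    _ = (z / β) ^ q * N β := by
        rw [Real.mul_rpow (by positivity) (Real.rpow_nonneg (hN β hβ.le) _),
          ← Real.rpow_mul (hN β hβ.le),
          one_div_mul_cancel hq.ne', Real.rpow_one]

lemma MemN.apply_div_mul_le_rpow (hN : MemN N)
    (hNq : MonotoneOn (fun t => N t ^ (1 / q) / t) (Ioi 0)) (hq : 0 < q) {π t b : ℝ}
    (hπ : 0 < π) (ht : 0 < t) (hb : 0 < b) (h : nwedge N π * t ≤ b) :
    N (t / b) * π ≤ (nwedge N π * t / b) ^ q := by
  set β := ninv N (1 / π)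
  have hβ : 0 < β := hN.ninv_pos (by positivity)
  have hNβ : N β = 1 / π := hN.apply_ninv (by positivity)
  have hwedge : nwedge N π * t / b = t / b / β := by
    simp only [nwedge, β]
    field_simp
  have htb : t / b ≤ β := by
    have : t / β ≤ b := by simpa only [nwedge, one_div_one_div, one_div_mul_eq_div] using h
    rw [div_le_iff₀ hβ] at this
    rw [div_le_iff₀ hb]
    linarith
  calc N (t / b) * π ≤ (t / b / β) ^ q * N β * π := by
        gcongr
        exact apply_le_div_rpow_mul_of_monotoneOn hNq (fun _ => hN.nonneg) hq (by positivity) htb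
    _ = (nwedge N π * t / b) ^ q := by
        rw [hNβ, hwedge]
        field_simp

end Growth

section Gradient

variable [PseudoMetricSpace Ω] {f : Ω → ℝ}

lemma LipschitzOnBalls.continuous (hf : LipschitzOnBalls f) : Continuous f :=
  continuous_iff_continuousAt.mpr fun x =>
    let ⟨_, hK⟩ := hf x 1
    hK.continuousOn.continuousAt (ball_mem_nhds x one_pos)

lemma LipschitzOnBalls.comp {φ : ℝ → ℝ} {K : ℝ≥0} (hφ : LipschitzWith K φ)
    (hf : LipschitzOnBalls f) : LipschitzOnBalls fun x => φ (f x) := fun x r =>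
  let ⟨L, hL⟩ := hf x r
  ⟨K * L, hφ.comp_lipschitzOnWith hL⟩

lemma LipschitzOnBalls.isBoundedUnder_slope (hf : LipschitzOnBalls f) (x : Ω) :
    IsBoundedUnder (· ≤ ·) (𝓝[≠] x) fun y => |f y - f x| / dist y x := by
  obtain ⟨K, hK⟩ := hf x 1
  refine ⟨K, eventually_map.mpr ?_⟩
  filter_upwards [nhdsWithin_le_nhds (ball_mem_nhds x one_pos)] with y hy
  refine div_le_of_le_mul₀ dist_nonneg K.2 ?_
  simpa only [Real.dist_eq] using hK.dist_le_mul y hy x (mem_ball_self one_pos)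

lemma gradNorm_of_nhdsNE_eq_bot {x : Ω} (hx : 𝓝[≠] x = ⊥) : gradNorm f x = 0 := by
  simp [gradNorm, hx, limsup_eq]

lemma gradNorm_nonneg (hf : LipschitzOnBalls f) (x : Ω) : 0 ≤ gradNorm f x := by
  rcases eq_or_neBot (𝓝[≠] x) with hx | hx
  · rw [gradNorm_of_nhdsNE_eq_bot hx]
  · exact le_limsup_of_frequently_le (.of_forall fun y => by positivity)
      (hf.isBoundedUnder_slope x)

lemma gradNorm_comp_le {φ : ℝ → ℝ} (hφ : LipschitzWith 1 φ) (hf : LipschitzOnBalls f) (x : Ω) :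
    gradNorm (fun y => φ (f y)) x ≤ gradNorm f x := by
  rcases eq_or_neBot (𝓝[≠] x) with hx | hx
  · simp only [gradNorm_of_nhdsNE_eq_bot hx, le_refl]
  · refine limsup_le_limsup (.of_forall fun y => ?_)
      (isCoboundedUnder_le_of_le _ fun y => by positivity) (hf.isBoundedUnder_slope x)
    have := hφ.dist_le_mul (f y) (f x)
    simp only [Real.dist_eq, NNReal.coe_one, one_mul] at this
    exact div_le_div_of_nonneg_right this dist_nonneg

lemma gradNorm_eq_zero_of_eventuallyEq {x : Ω} (h : f =ᶠ[𝓝 x] fun _ => f x) :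
    gradNorm f x = 0 := by
  rcases eq_or_neBot (𝓝[≠] x) with hx | hx
  · exact gradNorm_of_nhdsNE_eq_bot hx
  · have : (fun y => |f y - f x| / dist y x) =ᶠ[𝓝[≠] x] fun _ => 0 := by
      filter_upwards [nhdsWithin_le_nhds h] with y hy
      simp [hy]
    rw [gradNorm, limsup_congr this, limsup_const]

lemma gradNorm_neg (f : Ω → ℝ) : gradNorm (fun y => -f y) = gradNorm f := by
  ext x
  simp only [gradNorm, neg_sub_neg, abs_sub_comm]

lemma gradNorm_sub_const (f : Ω → ℝ) (c : ℝ) : gradNorm (fun y => f y - c) = gradNorm f := by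
  ext x
  simp only [gradNorm, sub_sub_sub_cancel_right]

lemma gradNorm_comp_le_indicator {φ : ℝ → ℝ} (hφ : LipschitzWith 1 φ) {a b : ℝ}
    (hφa : ∀ y ≤ a, φ y = φ a) (hφb : ∀ y ≥ b, φ y = φ b) (hf : LipschitzOnBalls f) (x : Ω) :
    gradNorm (fun y => φ (f y)) x ≤ {y | a ≤ f y ∧ f y ≤ b}.indicator (gradNorm f) x := by
  by_cases hx : x ∈ {y | a ≤ f y ∧ f y ≤ b}
  · rw [indicator_of_mem hx]
    exact gradNorm_comp_le hφ hf x
  rw [indicator_of_notMem hx]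
  refine (gradNorm_eq_zero_of_eventuallyEq ?_).le
  rcases not_and_or.mp hx with hxa | hxb
  · filter_upwards [hf.continuous.continuousAt.eventually_lt continuousAt_const
      (not_le.mp hxa)] with y hy
    rw [hφa _ hy.le, hφa _ (not_le.mp hxa).le]
  · filter_upwards [continuousAt_const.eventually_lt hf.continuous.continuousAt
      (not_le.mp hxb)] with y hy
    rw [hφb _ hy.le, hφb _ (not_le.mp hxb).le]

lemma gradLqNorm_comp_le [MeasurableSpace Ω] (μ : Measure Ω) (p : ℝ≥0∞) {φ : ℝ → ℝ}
    (hφ : LipschitzWith 1 φ) (hf : LipschitzOnBalls f) :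
    gradLqNorm μ p (fun y => φ (f y)) ≤ gradLqNorm μ p f :=
  eLpNorm_mono fun x => by
    simp only [Real.norm_eq_abs, abs_of_nonneg (gradNorm_nonneg hf x),
      abs_of_nonneg (gradNorm_nonneg (hf.comp hφ) x)]
    exact gradNorm_comp_le hφ hf x

end Gradient

section Median

variable [MeasurableSpace Ω] {μ : Measure Ω} {f : Ω → ℝ} {m : ℝ} {φ : ℝ → ℝ}

lemma IsMedian.comp_monotone (hm : IsMedian μ f m) (hφ : Monotone φ) :
    IsMedian μ (fun x => φ (f x)) (φ m) :=
  ⟨hm.1.trans (measure_mono fun _ hx => hφ hx), hm.2.trans (measure_mono fun _ hx => hφ hx)⟩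

lemma IsMedian.comp_antitone (hm : IsMedian μ f m) (hφ : Antitone φ) :
    IsMedian μ (fun x => φ (f x)) (φ m) :=
  ⟨hm.2.trans (measure_mono fun _ hx => hφ hx), hm.1.trans (measure_mono fun _ hx => hφ hx)⟩

end Median

section Orlicz

variable [MeasurableSpace Ω] (μ : Measure Ω) {N : ℝ → ℝ} {h : Ω → ℝ}

lemma ofReal_mul_weakOrliczNorm_le {D : ℝ} (hD : 0 < D) {A : ℝ≥0∞}
    (h_le : ∀ t, 0 < t → ENNReal.ofReal (D * (nwedge N (μ {x | t ≤ |h x|}).toReal * t)) ≤ A) :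
    ENNReal.ofReal (D * weakOrliczNorm μ N h) ≤ A := by
  rcases eq_or_ne A ⊤ with rfl | hA
  · exact le_top
  rw [ENNReal.ofReal_le_iff_le_toReal hA, ← le_div_iff₀' hD]
  refine Real.sSup_le (fun _ ⟨t, ht, hr⟩ => hr ▸ ?_) (by positivity)
  rw [le_div_iff₀' hD, ← ENNReal.ofReal_le_iff_le_toReal hA]
  exact h_le t ht

lemma ofReal_mul_orliczNorm_le {c : ℝ} (hc : 0 < c) {A : ℝ≥0∞}
    (h_le : ∀ v, 0 < v → A ≤ ENNReal.ofReal (c * v) →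
      ∫⁻ x, ENNReal.ofReal (N (|h x| / v)) ∂μ ≤ 1) :
    ENNReal.ofReal (c * orliczNorm μ N h) ≤ A := by
  rcases eq_or_ne A ⊤ with rfl | hA
  · exact le_top
  have hadm : ∀ ε > 0, orliczNorm μ N h ≤ A.toReal / c + ε := fun ε hε => by
    have hv : 0 < A.toReal / c + ε := by positivity
    refine csInf_le ⟨(0 : ℝ), fun _ hv => hv.1.le⟩ ⟨hv, h_le _ hv ?_⟩
    refine (ENNReal.ofReal_toReal hA).ge.trans (ENNReal.ofReal_le_ofReal ?_)
    rw [mul_add, mul_div_cancel₀ _ hc.ne']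
    linarith [mul_pos hc hε]
  rw [ENNReal.ofReal_le_iff_le_toReal hA, ← le_div_iff₀' hc]
  exact le_of_forall_pos_le_add hadm

variable [IsZeroOrProbabilityMeasure μ]

lemma nwedge_mul_le_of_lintegral_le_one (hN : MemN N) (hh : Measurable h) {v t : ℝ}
    (hv : 0 < v) (ht : 0 < t) (hint : ∫⁻ x, ENNReal.ofReal (N (|h x| / v)) ∂μ ≤ 1) :
    nwedge N (μ {x | t ≤ |h x|}).toReal * t ≤ v := by
  rcases (ENNReal.toReal_nonneg : 0 ≤ (μ {x | t ≤ |h x|}).toReal).eq_or_lt with hπ | hπ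
  · rw [← hπ, hN.nwedge_zero, zero_mul]
    exact hv.le
  set π := (μ {x | t ≤ |h x|}).toReal
  have hmarkov : N (t / v) * π ≤ 1 := by
    have hmeas : MeasurableSet {x | t ≤ |h x|} := measurableSet_le measurable_const hh.abs
    rw [← ENNReal.ofReal_le_one, ENNReal.ofReal_mul (hN.nonneg (by positivity)),
      ENNReal.ofReal_toReal (measure_ne_top μ _), ← lintegral_indicator_const hmeas]
    refine le_trans (lintegral_mono fun x => ?_) hint
    by_cases hx : t ≤ |h x|
    · rw [indicator_of_mem (show x ∈ {x | t ≤ |h x|} from hx)]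
      exact ENNReal.ofReal_le_ofReal (hN.apply_le_apply (by positivity) (by gcongr))
    · simp [indicator_of_notMem (show x ∉ {x | t ≤ |h x|} from hx)]
  have hβ : t / v ≤ ninv N (1 / π) :=
    hN.le_ninv (by positivity) (by positivity) ((le_div_iff₀ hπ).mpr hmarkov)
  have hβpos : 0 < ninv N (1 / π) := hN.ninv_pos (by positivity)
  rw [nwedge, one_div_mul_eq_div, div_le_iff₀ hβpos]
  rwa [div_le_iff₀ hv, mul_comm] at hβ

lemma exists_lintegral_le_one_of_abs_le (hN : MemN N) {ρ : ℝ} (hρ : 0 < ρ)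
    (hb : ∀ x, |h x| ≤ ρ) : ∃ v, 0 < v ∧ ∫⁻ x, ENNReal.ofReal (N (|h x| / v)) ∂μ ≤ 1 := by
  obtain ⟨s, hs, hNs, -⟩ := hN.exists_ninv_eq zero_le_one
  have hs : 0 < s := hs.lt_of_ne (by rintro rfl; simp [hN.map_zero] at hNs)
  refine ⟨ρ / s, by positivity, ?_⟩
  calc ∫⁻ x, ENNReal.ofReal (N (|h x| / (ρ / s))) ∂μ ≤ ∫⁻ _, ENNReal.ofReal (N s) ∂μ := by
        refine lintegral_mono fun x => ENNReal.ofReal_le_ofReal ?_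
        refine hN.apply_le_apply (by positivity) ?_
        rw [div_div_eq_mul_div, div_le_iff₀ hρ, mul_comm]
        exact mul_le_mul_of_nonneg_left (hb x) hs.le
    _ = μ univ := by simp [hNs]
    _ ≤ 1 := prob_le_one

lemma nwedge_mul_le_orliczNorm_of_abs_le (hN : MemN N) (hh : Measurable h) {ρ : ℝ} (hρ : 0 < ρ)
    (hb : ∀ x, |h x| ≤ ρ) {t : ℝ} (ht : 0 < t) :
    nwedge N (μ {x | t ≤ |h x|}).toReal * t ≤ orliczNorm μ N h :=
  le_csInf (exists_lintegral_le_one_of_abs_le μ hN hρ hb) fun _ ⟨hv, hint⟩ =>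
    nwedge_mul_le_of_lintegral_le_one μ hN hh hv ht hint

lemma nwedge_mul_le_weakOrliczNorm_of_abs_le (hN : MemN N) {ρ : ℝ} (hρ : 0 < ρ)
    (hb : ∀ x, |h x| ≤ ρ) {t : ℝ} (ht : 0 < t) :
    nwedge N (μ {x | t ≤ |h x|}).toReal * t ≤ weakOrliczNorm μ N h := by
  refine le_csSup ⟨1 / ninv N 1 * ρ, ?_⟩ ⟨t, ht, rfl⟩
  rintro _ ⟨t, ht, rfl⟩
  have hC : 0 ≤ 1 / ninv N 1 := one_div_nonneg.mpr (hN.ninv_nonneg zero_le_one)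
  by_cases htρ : t ≤ ρ
  · exact mul_le_mul (hN.nwedge_le ENNReal.toReal_nonneg measureReal_le_one) htρ ht.le hC
  · have : {x | t ≤ |h x|} = ∅ := eq_empty_of_forall_notMem fun x hx =>
      htρ ((show t ≤ |h x| from hx).trans (hb x))
    rw [this, measure_empty, ENNReal.toReal_zero, hN.nwedge_zero, zero_mul]
    positivity

end Orlicz

lemma eLpNorm_ofReal_rpow_eq_lintegral [MeasurableSpace Ω] (μ : Measure Ω) (f : Ω → ℝ) {q : ℝ}
    (hq : 0 < q) : eLpNorm f (ENNReal.ofReal q) μ ^ q = ∫⁻ x, ‖f x‖ₑ ^ q ∂μ := by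
  have := eLpNorm_nnreal_pow_eq_lintegral (μ := μ) (f := f) (p := q.toNNReal) (by simpa using hq)
  rwa [Real.coe_toNNReal q hq.le] at this

lemma Set.Countable.exists_pos_forall_mul_zpow_notMem {T : Set ℝ} (hT : T.Countable) :
    ∃ s : ℝ, 0 < s ∧ ∀ k : ℤ, s * 2 ^ k ∉ T := by
  set B := ⋃ k : ℤ, (fun c : ℝ => c * 2 ^ (-k)) '' T
  have hB : B.Countable := countable_iUnion fun k => hT.image _
  obtain ⟨s, ⟨hs, -⟩, hsB⟩ : (Ioo (0 : ℝ) 1 \ B).Nonempty := by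
    by_contra! h
    rw [sdiff_eq_empty] at h
    exact absurd (hB.mono h) (by simp)
  refine ⟨s, hs, fun k hk => hsB (mem_iUnion.mpr ⟨k, s * 2 ^ k, hk, ?_⟩)⟩
  change s * 2 ^ k * 2 ^ (-k) = s
  rw [mul_assoc, ← zpow_add₀ two_ne_zero, add_neg_cancel, zpow_zero, mul_one]

lemma setLIntegral_pos_eq_tsum_dyadic [MeasurableSpace Ω] (μ : Measure Ω) {u : Ω → ℝ}
    (hu : Measurable u) {s : ℝ} (hs : 0 < s) (g : Ω → ℝ≥0∞) :
    ∫⁻ x in {x | 0 < u x}, g x ∂μ =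
      ∑' k : ℤ, ∫⁻ x in {x | s * 2 ^ k ≤ u x ∧ u x < s * 2 ^ (k + 1)}, g x ∂μ := by
  have hmono : Monotone fun k : ℤ => s * 2 ^ k := fun k l hkl =>
    mul_le_mul_of_nonneg_left (zpow_le_zpow_right₀ one_le_two hkl) hs.le
  have hunion : {x | 0 < u x} = ⋃ k : ℤ, u ⁻¹' Ico (s * 2 ^ k) (s * 2 ^ (k + 1)) := by
    ext x
    simp only [mem_ofPred_eq, mem_iUnion, mem_preimage, mem_Ico]
    refine ⟨fun hx => ?_, fun ⟨k, hk, _⟩ => (by positivity : 0 < s * 2 ^ k).trans_le hk⟩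
    obtain ⟨k, hk, hk'⟩ := exists_mem_Ico_zpow (div_pos hx hs) one_lt_two
    exact ⟨k, by rwa [le_div_iff₀' hs] at hk, by rwa [div_lt_iff₀' hs] at hk'⟩
  rw [hunion, lintegral_iUnion (fun k => hu measurableSet_Ico)]
  · rfl
  · intro k l hkl
    simpa only [Order.succ_eq_add_one] using (hmono.pairwise_disjoint_on_Ico_succ hkl).preimage u

lemma lintegral_comp_abs_eq_add [MeasurableSpace Ω] (μ : Measure Ω) {u : Ω → ℝ}
    (hu : Measurable u) {F : ℝ → ℝ≥0∞} (hF : F 0 = 0) :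
    ∫⁻ x, F |u x| ∂μ =
      ∫⁻ x in {x | 0 < u x}, F (u x) ∂μ + ∫⁻ x in {x | 0 < -u x}, F (-u x) ∂μ := by
  have hsupp : (Function.support fun x => F |u x|) ⊆ {x | 0 < u x} ∪ {x | 0 < -u x} := by
    intro x hx
    by_contra hx'
    simp only [mem_union, mem_ofPred_eq, not_or, not_lt] at hx'
    exact hx (show F |u x| = 0 by rw [show u x = 0 by linarith, abs_zero, hF])
  have hpos : MeasurableSet {x | 0 < u x} := measurableSet_lt measurable_const hu
  have hneg : MeasurableSet {x | 0 < -u x} := measurableSet_lt measurable_const hu.neg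
  rw [← setLIntegral_eq_of_support_subset hsupp,
    lintegral_union hneg
      (disjoint_left.mpr fun x h₁ h₂ => by simp only [mem_ofPred_eq] at h₁ h₂; linarith),
    setLIntegral_congr_fun hpos fun x hx => by rw [abs_of_pos hx],
    setLIntegral_congr_fun hneg fun x hx => by rw [abs_of_neg (neg_pos.mp hx)]]

section OrliczSobolev

variable [PseudoMetricSpace Ω] [MeasurableSpace Ω]

def OrliczSobolevIneq (μ : Measure Ω) (N : ℝ → ℝ) (q D : ℝ) : Prop :=
  ∀ f : Ω → ℝ, LipschitzOnBalls f → ∀ m : ℝ, IsMedian μ f m →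
    ENNReal.ofReal (D * orliczNorm μ N fun x => f x - m) ≤ gradLqNorm μ (ENNReal.ofReal q) f

def WeakOrliczSobolevIneq (μ : Measure Ω) (N : ℝ → ℝ) (q D : ℝ) : Prop :=
  ∀ f : Ω → ℝ, LipschitzOnBalls f → ∀ m : ℝ, IsMedian μ f m →
    ENNReal.ofReal (D * weakOrliczNorm μ N fun x => f x - m) ≤ gradLqNorm μ (ENNReal.ofReal q) f

variable {μ : Measure Ω} [IsZeroOrProbabilityMeasure μ] {N : ℝ → ℝ} {q D : ℝ}

theorem OrliczSobolevIneq.weakOrliczSobolevIneq [OpensMeasurableSpace Ω]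
    (h : OrliczSobolevIneq μ N q D) (hN : MemN N) (hD : 0 < D) : WeakOrliczSobolevIneq μ N q D := by
  intro f hf m hm
  refine ofReal_mul_weakOrliczNorm_le μ hD fun t ht => ?_
  -- Truncate at `m ± t`: for `f` itself `orliczNorm` may be the junk value `sInf ∅ = 0`.
  set φ : ℝ → ℝ := fun a => max (min a (m + t)) (m - t)
  have hφ : LipschitzWith 1 φ := (LipschitzWith.id.min_const _).max_const _
  have hφm : φ m = m := by grind
  have hgm : IsMedian μ (fun x => φ (f x)) m :=
    hφm ▸ hm.comp_monotone fun a b hab => max_le_max (min_le_min hab le_rfl) le_rfl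
  have hlevel : {x | t ≤ |φ (f x) - m|} = {x | t ≤ |f x - m|} := by
    ext x
    simp only [mem_ofPred_eq, φ]
    grind [le_abs]
  calc ENNReal.ofReal (D * (nwedge N (μ {x | t ≤ |f x - m|}).toReal * t))
      = ENNReal.ofReal (D * (nwedge N (μ {x | t ≤ |φ (f x) - m|}).toReal * t)) := by
        rw [hlevel]
    _ ≤ ENNReal.ofReal (D * orliczNorm μ N fun x => φ (f x) - m) := by
        gcongr
        exact nwedge_mul_le_orliczNorm_of_abs_le μ hN
          ((hf.comp hφ).continuous.measurable.sub_const m) ht (fun x => by grind [abs_le]) ht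
    _ ≤ gradLqNorm μ (ENNReal.ofReal q) fun x => φ (f x) := h _ (hf.comp hφ) m hgm
    _ ≤ gradLqNorm μ (ENNReal.ofReal q) f := gradLqNorm_comp_le μ _ hφ hf

/-- Test the weak inequality on `u` truncated to `[t, 2t]`. -/
lemma WeakOrliczSobolevIneq.ofReal_mul_nwedge_mul_le {u : Ω → ℝ}
    (h : WeakOrliczSobolevIneq μ N q D) (hN : MemN N) (hD : 0 ≤ D) (hu : LipschitzOnBalls u)
    (hmed : IsMedian μ u 0) {t : ℝ} (ht : 0 < t) :
    ENNReal.ofReal (D * (nwedge N (μ {x | 2 * t ≤ u x}).toReal * t)) ≤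
      eLpNorm ({x | t ≤ u x ∧ u x ≤ 2 * t}.indicator (gradNorm u)) (ENNReal.ofReal q) μ := by
  set φ : ℝ → ℝ := fun a => min (max (a - t) 0) t
  have hφ : LipschitzWith 1 φ :=
    ((IsometryEquiv.subRight t).isometry.lipschitz.max_const 0).min_const t
  have hwm : IsMedian μ (fun x => φ (u x)) 0 := by
    have := hmed.comp_monotone (φ := φ) fun a b hab => by grind
    rwa [show φ 0 = 0 by grind] at this
  have hlevel : {x | t ≤ |φ (u x) - 0|} = {x | 2 * t ≤ u x} := by
    ext x
    simp only [mem_ofPred_eq, φ]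
    grind [le_abs]
  calc ENNReal.ofReal (D * (nwedge N (μ {x | 2 * t ≤ u x}).toReal * t))
      = ENNReal.ofReal (D * (nwedge N (μ {x | t ≤ |φ (u x) - 0|}).toReal * t)) := by
        rw [hlevel]
    _ ≤ ENNReal.ofReal (D * weakOrliczNorm μ N fun x => φ (u x) - 0) := by
        gcongr
        exact nwedge_mul_le_weakOrliczNorm_of_abs_le μ hN ht (fun x => by grind [abs_le]) ht
    _ ≤ gradLqNorm μ (ENNReal.ofReal q) fun x => φ (u x) := h _ (hu.comp hφ) 0 hwm
    _ ≤ _ := eLpNorm_mono fun x => by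
        rw [Real.norm_of_nonneg (gradNorm_nonneg (hu.comp hφ) x), Real.norm_of_nonneg
          (indicator_nonneg (fun y _ => gradNorm_nonneg hu y) x)]
        exact gradNorm_comp_le_indicator hφ (fun y hy => by grind) (fun y hy => by grind) hu x

lemma WeakOrliczSobolevIneq.lintegral_layer_le [OpensMeasurableSpace Ω] {u : Ω → ℝ}
    (h : WeakOrliczSobolevIneq μ N q D)
    (hN : MemN N) (hNq : MonotoneOn (fun t => N t ^ (1 / q) / t) (Ioi 0)) (hq : 0 < q)
    (hD : 0 < D) (hu : LipschitzOnBalls u) (hmed : IsMedian μ u 0) {t v : ℝ} (ht : 0 < t)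
    (hv : 0 < v) (hA : gradLqNorm μ (ENNReal.ofReal q) u ≤ ENNReal.ofReal (D / 4 * v)) :
    ∫⁻ x in {x | 2 * t ≤ u x ∧ u x < 4 * t}, ENNReal.ofReal (N (u x / v)) ∂μ ≤
      (∫⁻ x in {x | t ≤ u x ∧ u x ≤ 2 * t}, ‖gradNorm u x‖ₑ ^ q ∂μ) /
        ENNReal.ofReal (D / 4 * v) ^ q := by
  set π := μ {x | 2 * t ≤ u x}
  rcases eq_or_ne π 0 with hπ | hπ
  · rw [Measure.restrict_eq_zero.mpr (measure_mono_null (fun x hx => hx.1) hπ),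
      lintegral_zero_measure]
    exact zero_le
  have hπ' : 0 < π.toReal := ENNReal.toReal_pos hπ (measure_ne_top μ _)
  set E := {x | t ≤ u x ∧ u x ≤ 2 * t}
  have hE : MeasurableSet E := by
    have := hu.continuous.measurable
    measurability
  set B := eLpNorm (E.indicator (gradNorm u)) (ENNReal.ofReal q) μ with hBdef
  have hB : ENNReal.ofReal (D * (nwedge N π.toReal * t)) ≤ B :=
    h.ofReal_mul_nwedge_mul_le hN hD.le hu hmed ht
  have hBA : B ≤ ENNReal.ofReal (D / 4 * v) := (eLpNorm_indicator_le _).trans hA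
  have hwedge : nwedge N π.toReal * t ≤ v / 4 := by
    have := (ENNReal.ofReal_le_ofReal_iff (by positivity)).mp (hB.trans hBA)
    rw [show D / 4 * v = D * (v / 4) by ring] at this
    exact le_of_mul_le_mul_left this hD
  calc ∫⁻ x in {x | 2 * t ≤ u x ∧ u x < 4 * t}, ENNReal.ofReal (N (u x / v)) ∂μ
      ≤ ∫⁻ x in {x | 2 * t ≤ u x ∧ u x < 4 * t}, ENNReal.ofReal (N (t / (v / 4))) ∂μ := by
        refine setLIntegral_mono measurable_const fun x hx => ENNReal.ofReal_le_ofReal ?_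
        refine hN.apply_le_apply (div_nonneg (by linarith [hx.1]) hv.le) ?_
        rw [div_div_eq_mul_div, mul_comm]
        exact div_le_div_of_nonneg_right hx.2.le hv.le
    _ ≤ ENNReal.ofReal (N (t / (v / 4))) * π := by
        rw [setLIntegral_const]
        gcongr
        exact measure_mono fun x hx => hx.1
    _ = ENNReal.ofReal (N (t / (v / 4)) * π.toReal) := by
        rw [ENNReal.ofReal_mul (hN.nonneg (by positivity)), ENNReal.ofReal_toReal
          (measure_ne_top μ _)]
    _ ≤ ENNReal.ofReal ((nwedge N π.toReal * t / (v / 4)) ^ q) :=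
        ENNReal.ofReal_le_ofReal (hN.apply_div_mul_le_rpow hNq hq hπ' ht (by positivity) hwedge)
    _ = ENNReal.ofReal (D * (nwedge N π.toReal * t)) ^ q / ENNReal.ofReal (D / 4 * v) ^ q := by
        have : 0 ≤ nwedge N π.toReal := hN.nwedge_nonneg hπ'.le
        rw [← ENNReal.div_rpow_of_nonneg _ _ hq.le, ← ENNReal.ofReal_div_of_pos (by positivity),
          ENNReal.ofReal_rpow_of_nonneg (by positivity) hq.le]
        congr 2
        field_simp
    _ ≤ B ^ q / ENNReal.ofReal (D / 4 * v) ^ q := by gcongr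
    _ = _ := by
        rw [hBdef, eLpNorm_indicator_eq_eLpNorm_restrict hE,
          eLpNorm_ofReal_rpow_eq_lintegral _ _ hq]

lemma WeakOrliczSobolevIneq.setLIntegral_pos_le [OpensMeasurableSpace Ω] {u : Ω → ℝ}
    (h : WeakOrliczSobolevIneq μ N q D)
    (hN : MemN N) (hNq : MonotoneOn (fun t => N t ^ (1 / q) / t) (Ioi 0)) (hq : 0 < q)
    (hD : 0 < D) (hu : LipschitzOnBalls u) (hmed : IsMedian μ u 0) {s : ℝ} (hs : 0 < s)
    (hnull : ∀ k : ℤ, μ {x | u x = s * 2 ^ k} = 0) {v : ℝ} (hv : 0 < v)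
    (hA : gradLqNorm μ (ENNReal.ofReal q) u ≤ ENNReal.ofReal (D / 4 * v)) :
    ∫⁻ x in {x | 0 < u x}, ENNReal.ofReal (N (u x / v)) ∂μ ≤
      (∫⁻ x in {x | 0 < u x}, ‖gradNorm u x‖ₑ ^ q ∂μ) / ENNReal.ofReal (D / 4 * v) ^ q := by
  have hdouble : ∀ k : ℤ, s * 2 ^ (k + 1) = 2 * (s * 2 ^ k) := fun k => by
    rw [zpow_add_one₀ two_ne_zero]
    ring
  have hclosed : ∀ k : ℤ, ∫⁻ x in {x | s * 2 ^ k ≤ u x ∧ u x ≤ s * 2 ^ (k + 1)},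
      ‖gradNorm u x‖ₑ ^ q ∂μ =
      ∫⁻ x in {x | s * 2 ^ k ≤ u x ∧ u x < s * 2 ^ (k + 1)}, ‖gradNorm u x‖ₑ ^ q ∂μ := by
    intro k
    refine setLIntegral_congr (ae_eq_set.mpr ⟨measure_mono_null (fun x hx => ?_) (hnull (k + 1)),
      measure_mono_null (fun x hx => ?_) measure_empty⟩)
    · exact le_antisymm hx.1.2 (not_lt.mp fun h' => hx.2 ⟨hx.1.1, h'⟩)
    · exact hx.2 ⟨hx.1.1, hx.1.2.le⟩
  rw [setLIntegral_pos_eq_tsum_dyadic μ hu.continuous.measurable hs,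
    setLIntegral_pos_eq_tsum_dyadic μ hu.continuous.measurable hs,
    ← (Equiv.addRight (1 : ℤ)).tsum_eq]
  calc ∑' k : ℤ, ∫⁻ x in {x | s * 2 ^ (k + 1) ≤ u x ∧ u x < s * 2 ^ (k + 1 + 1)},
        ENNReal.ofReal (N (u x / v)) ∂μ
      ≤ ∑' k : ℤ, (∫⁻ x in {x | s * 2 ^ k ≤ u x ∧ u x ≤ s * 2 ^ (k + 1)},
        ‖gradNorm u x‖ₑ ^ q ∂μ) / ENNReal.ofReal (D / 4 * v) ^ q := by
        refine ENNReal.tsum_le_tsum fun k => ?_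
        have := h.lintegral_layer_le hN hNq hq hD hu hmed (by positivity : 0 < s * 2 ^ k) hv hA
        rwa [show 4 * (s * 2 ^ k) = 2 * (2 * (s * 2 ^ k)) by ring, ← hdouble, ← hdouble] at this
    _ = _ := by
        simp_rw [hclosed, div_eq_mul_inv]
        exact ENNReal.tsum_mul_right

lemma WeakOrliczSobolevIneq.lintegral_le_one [OpensMeasurableSpace Ω] {u : Ω → ℝ}
    (h : WeakOrliczSobolevIneq μ N q D)
    (hN : MemN N) (hNq : MonotoneOn (fun t => N t ^ (1 / q) / t) (Ioi 0)) (hq : 0 < q)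
    (hD : 0 < D) (hu : LipschitzOnBalls u) (hmed : IsMedian μ u 0) {s : ℝ} (hs : 0 < s)
    (hnull : ∀ k : ℤ, μ {x | u x = s * 2 ^ k} = 0 ∧ μ {x | -u x = s * 2 ^ k} = 0) {v : ℝ}
    (hv : 0 < v) (hA : gradLqNorm μ (ENNReal.ofReal q) u ≤ ENNReal.ofReal (D / 4 * v)) :
    ∫⁻ x, ENNReal.ofReal (N (|u x| / v)) ∂μ ≤ 1 := by
  have hu' : LipschitzOnBalls fun x => -u x := hu.comp (IsometryEquiv.neg ℝ).isometry.lipschitz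
  have hmed' : IsMedian μ (fun x => -u x) 0 := by
    simpa using hmed.comp_antitone (φ := fun a => -a) fun a b hab => neg_le_neg hab
  have hpos := h.setLIntegral_pos_le hN hNq hq hD hu hmed hs (fun k => (hnull k).1) hv hA
  have hneg := h.setLIntegral_pos_le hN hNq hq hD hu' hmed' hs (fun k => (hnull k).2) hv
    (by rwa [gradLqNorm, gradNorm_neg])
  rw [gradNorm_neg] at hneg
  calc ∫⁻ x, ENNReal.ofReal (N (|u x| / v)) ∂μ
      = ∫⁻ x in {x | 0 < u x}, ENNReal.ofReal (N (u x / v)) ∂μ +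
          ∫⁻ x in {x | 0 < -u x}, ENNReal.ofReal (N (-u x / v)) ∂μ :=
        lintegral_comp_abs_eq_add μ hu.continuous.measurable (F := fun r => .ofReal (N (r / v)))
          (by simp [hN.map_zero])
    _ ≤ (∫⁻ x in {x | 0 < u x}, ‖gradNorm u x‖ₑ ^ q ∂μ +
          ∫⁻ x in {x | 0 < -u x}, ‖gradNorm u x‖ₑ ^ q ∂μ) / ENNReal.ofReal (D / 4 * v) ^ q := by
        rw [← ENNReal.div_add_div_same]
        exact add_le_add hpos hneg
    _ ≤ gradLqNorm μ (ENNReal.ofReal q) u ^ q / ENNReal.ofReal (D / 4 * v) ^ q := by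
        rw [gradLqNorm, eLpNorm_ofReal_rpow_eq_lintegral μ _ hq, ← lintegral_union
          (measurableSet_lt measurable_const hu'.continuous.measurable)
          (disjoint_left.mpr fun x h₁ h₂ => by simp only [mem_ofPred_eq] at h₁ h₂; linarith)]
        exact ENNReal.div_le_div_right (setLIntegral_le_lintegral _ _) _
    _ ≤ 1 := ENNReal.div_le_of_le_mul (by rw [one_mul]; gcongr)

theorem WeakOrliczSobolevIneq.orliczSobolevIneq [OpensMeasurableSpace Ω]
    (h : WeakOrliczSobolevIneq μ N q D)
    (hN : MemN N) (hNq : MonotoneOn (fun t => N t ^ (1 / q) / t) (Ioi 0)) (hq : 0 < q)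
    (hD : 0 < D) : OrliczSobolevIneq μ N q (D / 4) := by
  intro f hf m hm
  set u : Ω → ℝ := fun x => f x - m
  have hu : LipschitzOnBalls u := hf.comp (IsometryEquiv.subRight m).isometry.lipschitz
  have hmed : IsMedian μ u 0 := by
    simpa using hm.comp_monotone (φ := fun a => a - m) fun a b hab => sub_le_sub_right hab m
  obtain ⟨s, hs, hsT⟩ :=
    ((Measure.countable_meas_level_set_pos (μ := μ) hu.continuous.measurable).union
      (Measure.countable_meas_level_set_pos (μ := μ) hu.continuous.measurable.neg)
      ).exists_pos_forall_mul_zpow_notMem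
  have hnull : ∀ k : ℤ, μ {x | u x = s * 2 ^ k} = 0 ∧ μ {x | -u x = s * 2 ^ k} = 0 := fun k =>
    ⟨by_contra fun h0 => hsT k (.inl (pos_iff_ne_zero.mpr h0)),
      by_contra fun h0 => hsT k (.inr (pos_iff_ne_zero.mpr h0))⟩
  rw [gradLqNorm, ← gradNorm_sub_const f m]
  exact ofReal_mul_orliczNorm_le μ (by positivity) fun v hv hA =>
    h.lintegral_le_one hN hNq hq hD hu hmed hs hnull hv hA

end OrliczSobolev

theorem orlicz_sobolev_iff_weak_orlicz_sobolev_general {Ω : Type*} [MetricSpace Ω]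
    [MeasurableSpace Ω] [BorelSpace Ω]
    (μ : Measure Ω) [IsProbabilityMeasure μ]
    (N : ℝ → ℝ) (hN : MemN N) (q : ℝ) (hq : 1 ≤ q)
    (hNq : MonotoneOn (fun t => N t ^ (1 / q) / t) (Ioi (0 : ℝ))) :
    (∀ D₁ : ℝ, 0 < D₁ →
      (∀ f : Ω → ℝ, LipschitzOnBalls f → ∀ m : ℝ, IsMedian μ f m →
        ENNReal.ofReal (D₁ * orliczNorm μ N fun x => f x - m) ≤
          gradLqNorm μ (ENNReal.ofReal q) f) →
      ∀ f : Ω → ℝ, LipschitzOnBalls f → ∀ m : ℝ, IsMedian μ f m →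
        ENNReal.ofReal (D₁ * weakOrliczNorm μ N fun x => f x - m) ≤
          gradLqNorm μ (ENNReal.ofReal q) f) ∧
    (∀ D₂ : ℝ, 0 < D₂ →
      (∀ f : Ω → ℝ, LipschitzOnBalls f → ∀ m : ℝ, IsMedian μ f m →
        ENNReal.ofReal (D₂ * weakOrliczNorm μ N fun x => f x - m) ≤
          gradLqNorm μ (ENNReal.ofReal q) f) →
      ∀ f : Ω → ℝ, LipschitzOnBalls f → ∀ m : ℝ, IsMedian μ f m →
        ENNReal.ofReal (D₂ / 4 * orliczNorm μ N fun x => f x - m) ≤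
          gradLqNorm μ (ENNReal.ofReal q) f) :=
  ⟨fun _ hD₁ h => OrliczSobolevIneq.weakOrliczSobolevIneq h hN hD₁,
    fun _ hD₂ h => WeakOrliczSobolevIneq.orliczSobolevIneq h hN hNq (by linarith) hD₂⟩

/-- For `N ∈ 𝒩` with `N(t)^{1/q}/t` non-decreasing, the strong and
weak-type Orlicz–Sobolev inequalities are equivalent: (1) with `D₁` gives (2) with `D₂ = D₁`,
and (2) with `D₂` gives (1) with `D₂/4` (so `D₁ ≤ D₂ ≤ 4·D₁`). -/
theorem orlicz_sobolev_iff_weak_orlicz_sobolev {Ω : Type*} [MetricSpace Ω]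
    [TopologicalSpace.SeparableSpace Ω] [MeasurableSpace Ω] [BorelSpace Ω]
    (μ : Measure Ω) [IsProbabilityMeasure μ] (hnd : ∀ x : Ω, μ {x} ≠ 1)
    (N : ℝ → ℝ) (hN : MemN N) (q : ℝ) (hq : 1 ≤ q)
    (hNq : MonotoneOn (fun t => N t ^ (1 / q) / t) (Ioi (0 : ℝ))) :
    (∀ D₁ : ℝ, 0 < D₁ →
      (∀ f : Ω → ℝ, LipschitzOnBalls f → ∀ m : ℝ, IsMedian μ f m →
        ENNReal.ofReal (D₁ * orliczNorm μ N fun x => f x - m) ≤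
          gradLqNorm μ (ENNReal.ofReal q) f) →
      ∀ f : Ω → ℝ, LipschitzOnBalls f → ∀ m : ℝ, IsMedian μ f m →
        ENNReal.ofReal (D₁ * weakOrliczNorm μ N fun x => f x - m) ≤
          gradLqNorm μ (ENNReal.ofReal q) f) ∧
    (∀ D₂ : ℝ, 0 < D₂ →
      (∀ f : Ω → ℝ, LipschitzOnBalls f → ∀ m : ℝ, IsMedian μ f m →
        ENNReal.ofReal (D₂ * weakOrliczNorm μ N fun x => f x - m) ≤
          gradLqNorm μ (ENNReal.ofReal q) f) →
      ∀ f : Ω → ℝ, LipschitzOnBalls f → ∀ m : ℝ, IsMedian μ f m →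
        ENNReal.ofReal (D₂ / 4 * orliczNorm μ N fun x => f x - m) ≤
          gradLqNorm μ (ENNReal.ofReal q) f) :=
  orlicz_sobolev_iff_weak_orlicz_sobolev_general μ N hN q hq hNq
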